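/- arXiv:0811.0256 — 3 statements merged into one kernel-verified Lean document; each statement's English description precedes it below -/
import Mathlib

section
/- Let R ∈ ℂ[[z]] and m ≥ 1, n, k natural numbers with n < k. With Ψ_{m,n} the diagonal-extraction map on ℂ[[t,z]], one has Ψ_{m,n}( R / (1 - t^m z^k) ) = R(0), i.e., only the constant term survives. -/
/-!
Writing `u = t^m z^k`, the identity `G = G·u + R` says that every coefficient of `G` is the
corresponding coefficient of `R` plus the coefficient of `G` one step `(m, k)` further down.
Coefficients of `R` vanish off the line `t⁰`, so descending from a monomial `t^a z^b` strictly
below the slope `k/m` (here `t^{sm} z^{sn}` with `s ≥ 1`, since `n < k`) never meets `R`: the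
walk either leaves the quadrant or stays below the slope, and its coefficient is `0`.
-/

open MvPowerSeries

namespace MvPowerSeries

variable {σ R : Type*} [CommRing R]

theorem coeff_eq_coeff_mul_one_sub_monomial_add (G : MvPowerSeries σ R) (e d : σ →₀ ℕ) :
    coeff d G = coeff d (G * (1 - monomial e 1)) + if e ≤ d then coeff (d - e) G else 0 := by
  rw [mul_sub, mul_one, map_sub, coeff_mul_monomial, mul_one]
  split_ifs <;> ring

theorem coeff_eq_zero_of_lt_slope (G : MvPowerSeries (Fin 2) R) (e : Fin 2 →₀ ℕ)
    (he : 0 < e 0) (hG : ∀ d : Fin 2 →₀ ℕ, d 0 ≠ 0 → coeff d (G * (1 - monomial e 1)) = 0) :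
    ∀ d : Fin 2 →₀ ℕ, d 1 * e 0 < d 0 * e 1 → coeff d G = 0 := by
  intro d
  induction hd : d 0 using Nat.strong_induction_on generalizing d with
  | _ a ih =>
    intro hslope
    have ha : a ≠ 0 := by rintro rfl; omega
    rw [coeff_eq_coeff_mul_one_sub_monomial_add G e d, hG d (hd ▸ ha), zero_add]
    split_ifs with hed
    · have h0 : e 0 ≤ a := hd ▸ hed 0
      have h1 : e 1 ≤ d 1 := hed 1
      refine ih (a - e 0) (by omega) (d - e) (by simp [hd]) ?_
      simp only [Finsupp.coe_tsub, Pi.sub_apply]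
      zify [h0, h1] at hslope ⊢
      linarith
    · rfl

end MvPowerSeries

/-- Let `R = Σ_j f_j z^j ∈ ℂ[[z]]`, `m ≥ 1` and `n < k`.  If `G = R / (1 - t^m z^k)`
in `ℂ[[t,z]]`, then the diagonal-extraction map `Ψ_{m,n}` (sending `t^{sm} z^{sn} ↦ T^s`)
gives `Ψ_{m,n}(G) = R(0)`: only the constant term survives. -/
theorem stmt4 (m n k : ℕ) (hm : 1 ≤ m) (hk : n < k) (f : ℕ → ℂ)
    (G : MvPowerSeries (Fin 2) ℂ)
    (hG : ∀ d : Fin 2 →₀ ℕ,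
      MvPowerSeries.coeff d
          (G * (1 - (MvPowerSeries.X 0) ^ m * (MvPowerSeries.X 1) ^ k)) =
        if d 0 = 0 then f (d 1) else 0) :
    ∀ s : ℕ,
      MvPowerSeries.coeff (Finsupp.single (0 : Fin 2) (s * m) + Finsupp.single 1 (s * n)) G =
        if s = 0 then f 0 else 0 := by
  set e : Fin 2 →₀ ℕ := Finsupp.single 0 m + Finsupp.single 1 k
  have he0 : e 0 = m := by simp [e]
  have he1 : e 1 = k := by simp [e]
  have hu : (X 0 : MvPowerSeries (Fin 2) ℂ) ^ m * X 1 ^ k = monomial e 1 := by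
    rw [X_pow_eq, X_pow_eq, monomial_mul_monomial, one_mul]
  rw [hu] at hG
  intro s
  rcases Nat.eq_zero_or_pos s with rfl | hs
  · have he : ¬ e ≤ 0 := fun h => by have := h 0; rw [he0, Finsupp.zero_apply] at this; omega
    simp only [zero_mul, Finsupp.single_zero, add_zero]
    rw [coeff_eq_coeff_mul_one_sub_monomial_add G e 0, hG, if_neg he, add_zero]
    simp
  · rw [if_neg hs.ne']
    refine coeff_eq_zero_of_lt_slope G e (he0 ▸ hm) (fun d hd => by simp [hG, hd]) _ ?_
    simpa [he0, he1, mul_right_comm s n m] using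
      Nat.mul_lt_mul_of_pos_left hk (Nat.mul_pos hs hm)
end

section
/- The Poincaré series of the algebra of invariants of the binary form of degree d satisfies Springer's formula: P_{2,d}(T) = Σ_{0 ≤ k < d/2} φ_{d-2k}( (-1)^k z^{k(k+1)} (1-z²) / ( (z²;z²)_k (z²;z²)_{d-k} ) ), where φ_n is the linear operator on ℂ[[z]] extracting coefficients at powers divisible by n (and replacing z^n by z), assuming the Sylvester–Cayley input that dim(I_{2,d})_n equals the coefficient of (t z^d)^n in f_d(t,z²) = (1-z²)/∏_{j=0}^{d}(1 - t z^{2j}). -/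
/-!
Partial fractions in `t`: since the nodes `z^{2j}`, `0 ≤ j ≤ d`, are distinct, interpolation at
`t = z^{-2k}` gives `1 / ∏_{j ≤ d} (1 - t z^{2j}) = Σ_k c_k / (1 - t z^{2k})` with
`c_k = ∏_{j ≠ k} (1 - z^{2(j-k)})⁻¹ = (-1)^k z^{k(k+1)} / ((z²;z²)_k (z²;z²)_{d-k})`.
The coefficient of `t^n z^{dn}` in `(1 - z²) c_k / (1 - t z^{2k})` is that of `z^{(d-2k)n}` in
`(1 - z²) c_k`; when `2k ≥ d` it vanishes, because then `k ≥ 1` and `z^{k(k+1)}` divides `c_k`.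
-/

open Finset

/-- The coefficient-extraction operator `φ_m : ℂ[[z]] → ℂ[[T]]`,
`φ_m(Σ a_j z^j) = Σ_s a_{ms} T^s`. -/
noncomputable def phiOp (m : ℕ) (A : PowerSeries ℂ) : PowerSeries ℂ :=
  PowerSeries.mk fun s => PowerSeries.coeff (m * s) A

open scoped PowerSeries

section qPochhammer

variable {R : Type*} [CommRing R]

def qPochhammer (q : R) (n : ℕ) : R := ∏ j ∈ range n, (1 - q ^ (j + 1))

theorem prod_range_pow_sub_pow (q : R) (k : ℕ) :
    ∏ j ∈ range k, (q ^ k - q ^ j) =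
      (-1) ^ k * q ^ (∑ j ∈ range k, j) * qPochhammer q k := by
  calc ∏ j ∈ range k, (q ^ k - q ^ j)
      = ∏ j ∈ range k, ((-1) * q ^ j * (1 - q ^ (k - 1 - j + 1))) := by
        refine prod_congr rfl fun j hj => ?_
        nth_rw 1 [show k = j + (k - 1 - j + 1) by have := mem_range.mp hj; omega]
        ring
    _ = _ := by
        rw [prod_mul_distrib, prod_mul_distrib, prod_const, card_range, prod_pow_eq_pow_sum,
          qPochhammer, prod_range_reflect (fun j => 1 - q ^ (j + 1))]

theorem prod_range_pow_sub_pow_add (q : R) (k n : ℕ) :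
    ∏ i ∈ range n, (q ^ k - q ^ (k + 1 + i)) = q ^ (k * n) * qPochhammer q n := by
  calc ∏ i ∈ range n, (q ^ k - q ^ (k + 1 + i))
      = ∏ i ∈ range n, (q ^ k * (1 - q ^ (i + 1))) := prod_congr rfl fun i _ => by ring
    _ = _ := by rw [prod_mul_distrib, prod_const, card_range, ← pow_mul, qPochhammer]

theorem prod_range_succ_erase_pow_sub_pow (q : R) {k d : ℕ} (hk : k ≤ d) :
    ∏ j ∈ (range (d + 1)).erase k, (q ^ k - q ^ j) =
      (-1) ^ k * q ^ (∑ j ∈ range k, j + k * (d - k)) *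
        qPochhammer q k * qPochhammer q (d - k) := by
  have hsplit : (range (d + 1)).erase k = range k ∪ Ico (k + 1) (d + 1) := by
    ext j; simp; omega
  rw [hsplit, prod_union (disjoint_left.mpr fun j hj hj' => by simp at hj hj'; omega),
    prod_Ico_eq_prod_range, Nat.add_sub_add_right, prod_range_pow_sub_pow,
    prod_range_pow_sub_pow_add]
  ring

end qPochhammer

namespace Polynomial

variable {R : Type*} [CommRing R] [IsDomain R] {ι : Type*} [DecidableEq ι]

theorem sum_C_mul_prod_erase_one_sub_C_mul_X_eq_one {s : Finset ι} (hs : s.Nonempty)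
    {y a : ι → R} (hy : Set.InjOn y s) (hy0 : ∀ i ∈ s, y i ≠ 0)
    (ha : ∀ k ∈ s, a k * ∏ j ∈ s.erase k, (y k - y j) = y k ^ (#s - 1)) :
    ∑ k ∈ s, C (a k) * ∏ j ∈ s.erase k, (1 - C (y j) * X) = 1 := by
  let K := FractionRing R
  let f := algebraMap R K
  have hf : Function.Injective f := IsFractionRing.injective R K
  have hfy0 : ∀ i ∈ s, f (y i) ≠ 0 := fun i hi => (map_ne_zero_iff f hf).mpr (hy0 i hi)
  refine map_injective f hf ?_
  simp only [Polynomial.map_sum, Polynomial.map_mul, Polynomial.map_prod, Polynomial.map_sub,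
    Polynomial.map_one, Polynomial.map_C, Polynomial.map_X]
  have hcard : #s - 1 < #s := Nat.sub_one_lt (card_ne_zero_of_mem hs.choose_spec)
  refine eq_of_degrees_lt_of_eval_index_eq s (v := fun i => (f (y i))⁻¹) ?_ ?_ ?_ ?_
  · intro i hi j hj hij
    exact hy hi hj (hf (inv_injective hij))
  · refine (degree_le_of_natDegree_le (natDegree_sum_le_of_forall_le _ _ fun k hk => ?_)).trans_lt
      (by exact_mod_cast hcard)
    refine (natDegree_C_mul_le _ _).trans ((natDegree_prod_le _ _).trans ?_)
    refine (sum_le_card_nsmul _ _ 1 fun j _ => ?_).trans (by simp [card_erase_of_mem hk])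
    compute_degree
  · exact degree_one_le.trans_lt (by exact_mod_cast hcard.trans_le' (Nat.zero_le _))
  · intro i hi
    rw [eval_one, eval_finsetSum, sum_eq_single_of_mem i hi]
    · have hfa := congrArg f (ha i hi)
      simp only [map_mul, map_prod, map_sub, map_pow] at hfa
      simp only [eval_mul, eval_C, eval_prod, eval_sub, eval_one, eval_X]
      have : ∀ j ∈ s.erase i,
          1 - f (y j) * (f (y i))⁻¹ = (f (y i) - f (y j)) * (f (y i))⁻¹ := by
        intro j _
        rw [sub_mul, mul_inv_cancel₀ (hfy0 i hi)]
      rw [prod_congr rfl this, prod_mul_distrib, prod_const, card_erase_of_mem hi, ← mul_assoc,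
        hfa, inv_pow, mul_inv_cancel₀ (pow_ne_zero _ (hfy0 i hi))]
    · intro k hk hki
      rw [eval_mul, eval_prod, prod_eq_zero (mem_erase.mpr ⟨Ne.symm hki, hi⟩)]
      · rw [mul_zero]
      · simp [mul_inv_cancel₀ (hfy0 i hi)]

end Polynomial

namespace PowerSeries

variable {R : Type*} [CommRing R]

theorem one_sub_C_mul_X_mul_rescale_mk_one (b : R) : (1 - C b * X) * rescale b (mk 1) = 1 := by
  rw [← rescale_X, ← map_one (rescale b), ← map_sub, ← map_mul, mul_comm,
    mk_one_mul_one_sub_eq_one, map_one]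

theorem prod_one_sub_C_mul_X_mul_mk_sum_eq_one {ι : Type*} [DecidableEq ι] {s : Finset ι}
    {y a : ι → R}
    (h : ∑ k ∈ s, Polynomial.C (a k) *
      ∏ j ∈ s.erase k, (1 - Polynomial.C (y j) * Polynomial.X) = 1) :
    (∏ j ∈ s, (1 - C (y j) * X)) * mk (fun n => ∑ k ∈ s, a k * y k ^ n) = 1 := by
  have hmk :
      mk (fun n => ∑ k ∈ s, a k * y k ^ n) = ∑ k ∈ s, C (a k) * rescale (y k) (mk 1) := by
    ext n
    simp [map_sum, coeff_rescale]
  have hcoe := congrArg (Polynomial.coeToPowerSeries.ringHom (R := R)) h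
  simp only [map_sum, map_mul, map_prod, map_sub, map_one,
    Polynomial.coeToPowerSeries.ringHom_apply, Polynomial.coe_C, Polynomial.coe_X] at hcoe
  rw [hmk, mul_sum]
  refine (sum_congr rfl fun k hk => ?_).trans hcoe
  rw [← mul_prod_erase s _ hk]
  linear_combination (C (a k) * ∏ j ∈ s.erase k, (1 - C (y j) * X)) *
    one_sub_C_mul_X_mul_rescale_mk_one (y k)

theorem coeff_mul_X_pow_mul_eq_ite {g : R⟦X⟧} {a b : ℕ}
    (hg : a ≤ b → constantCoeff g = 0) (n : ℕ) :
    coeff (a * n) (g * X ^ (b * n)) = if b < a then coeff ((a - b) * n) g else 0 := by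
  rw [coeff_mul_X_pow']
  split_ifs with hn hab hab
  · rw [Nat.sub_mul]
  · rw [Nat.sub_eq_zero_of_le (Nat.mul_le_mul_right n (not_lt.mp hab)),
      coeff_zero_eq_constantCoeff_apply, hg (not_lt.mp hab)]
  · exact absurd (Nat.mul_le_mul_right n hab.le) hn
  · rfl

end PowerSeries

namespace MvPowerSeries

variable (R : Type*) [CommRing R]

noncomputable def finTwoToPowerSeries : MvPowerSeries (Fin 2) R →+* R⟦X⟧⟦X⟧ :=
  (PowerSeries.map (renameEquiv R (Equiv.equivPUnit (Fin 1))).toRingHom).comp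
    (finSuccEquiv R 1).toRingHom

variable {R}

theorem coeff_coeff_finTwoToPowerSeries (F : MvPowerSeries (Fin 2) R) (n m : ℕ) :
    PowerSeries.coeff m (PowerSeries.coeff n (finTwoToPowerSeries R F)) =
      coeff (Finsupp.single 0 n + Finsupp.single 1 m) F := by
  have : Finsupp.single 0 n + Finsupp.single 1 m =
      Finsupp.cons n (Finsupp.single (0 : Fin 1) m) := by
    ext i
    refine Fin.cases (by simp) (fun j => ?_) i
    rw [Fin.fin_one_eq_zero j, Finsupp.cons_succ]
    simp
  rw [this, ← coeff_coeff_finSuccEquiv,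
    ← coeff_embDomain_rename (Equiv.equivPUnit (Fin 1)).toEmbedding, Finsupp.embDomain_single]
  rfl

@[simp]
theorem finTwoToPowerSeries_X_zero : finTwoToPowerSeries R (X 0) = PowerSeries.X := by
  simp [finTwoToPowerSeries]

@[simp]
theorem finTwoToPowerSeries_X_one : finTwoToPowerSeries R (X 1) = PowerSeries.C PowerSeries.X := by
  have := finSuccEquiv_X_succ (R := R) (n := 1) 0
  simp only [Fin.succ_zero_eq_one] at this
  simp [finTwoToPowerSeries, this]
  rfl

end MvPowerSeries

namespace PowerSeries

variable {K : Type*} [Field K]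

/-- The coefficient of `1 / (1 - t z^{2k})` in the partial fractions of
`1 / ∏_{j ≤ d} (1 - t z^{2j})`. -/
noncomputable def springerCoeff (d k : ℕ) : K⟦X⟧ :=
  (-1) ^ k * X ^ (k * (k + 1)) * (qPochhammer (X ^ 2) k * qPochhammer (X ^ 2) (d - k))⁻¹

theorem constantCoeff_qPochhammer_X_sq (n : ℕ) :
    constantCoeff (qPochhammer (X ^ 2 : K⟦X⟧) n) = 1 := by
  simp [qPochhammer, map_prod]

theorem constantCoeff_springerCoeff {d k : ℕ} (hk : k ≠ 0) :
    constantCoeff (springerCoeff d k : K⟦X⟧) = 0 := by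
  simp [springerCoeff, hk]

theorem springerCoeff_mul_prod_erase {d k : ℕ} (hk : k ≤ d) :
    (springerCoeff d k : K⟦X⟧) *
        ∏ j ∈ (range (d + 1)).erase k, ((X ^ 2) ^ k - (X ^ 2) ^ j) =
      ((X ^ 2) ^ k) ^ d := by
  have hexp : k * (k + 1) + 2 * (∑ j ∈ range k, j + k * (d - k)) = 2 * (k * d) := by
    have hsum := sum_range_id_mul_two k
    obtain ⟨e, rfl⟩ := Nat.exists_eq_add_of_le hk
    rw [Nat.add_sub_cancel_left]
    rcases k with _ | k
    · simp
    · rw [Nat.add_sub_cancel] at hsum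
      linear_combination hsum
  have hsign : ((-1 : K⟦X⟧) ^ k) ^ 2 = 1 := by rw [← pow_mul, pow_mul']; simp
  rw [springerCoeff, prod_range_succ_erase_pow_sub_pow _ hk, ← pow_mul, ← pow_mul, ← pow_mul,
    ← hexp, pow_add]
  set u : K⟦X⟧ := qPochhammer (X ^ 2) k * qPochhammer (X ^ 2) (d - k)
  have hu : u * u⁻¹ = 1 :=
    PowerSeries.mul_inv_cancel u (by simp [u, constantCoeff_qPochhammer_X_sq])
  linear_combination
    (X ^ (k * (k + 1)) * X ^ (2 * (∑ j ∈ range k, j + k * (d - k))) : K⟦X⟧) *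
    (((-1) ^ k) ^ 2 * hu + hsign)

theorem prod_one_sub_mul_mk_sum_springerCoeff_eq_one (d : ℕ) :
    (∏ j ∈ range (d + 1), (1 - C ((X ^ 2 : K⟦X⟧) ^ j) * X)) *
      mk (fun n => ∑ k ∈ range (d + 1), springerCoeff d k * ((X ^ 2) ^ k) ^ n) = 1 := by
  refine prod_one_sub_C_mul_X_mul_mk_sum_eq_one
    (Polynomial.sum_C_mul_prod_erase_one_sub_C_mul_X_eq_one nonempty_range_add_one ?_ ?_ ?_)
  · intro i _ j _ hij
    have := congrArg order hij
    simp only [← pow_mul, order_X_pow, Nat.cast_inj] at this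
    omega
  · exact fun i _ => pow_ne_zero _ (pow_ne_zero _ X_ne_zero)
  · intro k hk
    rw [card_range, Nat.add_sub_cancel]
    exact springerCoeff_mul_prod_erase (Nat.lt_succ_iff.mp (mem_range.mp hk))

end PowerSeries

namespace MvPowerSeries

variable {K : Type*} [Field K]

theorem finTwoToPowerSeries_inv_prod (d : ℕ) :
    finTwoToPowerSeries K (∏ j ∈ range (d + 1), (1 - X 0 * X 1 ^ (2 * j)))⁻¹ =
      PowerSeries.mk (fun n => ∑ k ∈ range (d + 1),
        PowerSeries.springerCoeff d k * ((PowerSeries.X ^ 2) ^ k) ^ n) := by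
  set P : MvPowerSeries (Fin 2) K := ∏ j ∈ range (d + 1), (1 - X 0 * X 1 ^ (2 * j))
  have hP : finTwoToPowerSeries K P =
      ∏ j ∈ range (d + 1), (1 - PowerSeries.C ((PowerSeries.X ^ 2) ^ j) * PowerSeries.X) := by
    simp [P, map_prod, ← pow_mul, mul_comm]
  have hPinv : P⁻¹ * P = 1 := MvPowerSeries.inv_mul_cancel P (by simp [P, map_prod])
  rw [← mul_one (finTwoToPowerSeries K P⁻¹),
    ← PowerSeries.prod_one_sub_mul_mk_sum_springerCoeff_eq_one d, ← hP, ← mul_assoc,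
    ← map_mul, hPinv, map_one, one_mul]

theorem coeff_one_sub_X_one_sq_mul_inv_prod (d n m : ℕ) :
    coeff (Finsupp.single 0 n + Finsupp.single 1 m)
        ((1 - X 1 ^ 2) * (∏ j ∈ range (d + 1), (1 - X 0 * X 1 ^ (2 * j)))⁻¹ :
          MvPowerSeries (Fin 2) K) =
      ∑ k ∈ range (d + 1), PowerSeries.coeff m
        ((1 - PowerSeries.X ^ 2) * PowerSeries.springerCoeff d k *
          PowerSeries.X ^ (2 * k * n)) := by
  have hnum : finTwoToPowerSeries K (1 - X 1 ^ 2) = PowerSeries.C (1 - PowerSeries.X ^ 2) := by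
    simp
  rw [← coeff_coeff_finTwoToPowerSeries, map_mul, finTwoToPowerSeries_inv_prod, hnum,
    PowerSeries.coeff_C_mul, PowerSeries.coeff_mk, mul_sum, map_sum]
  simp only [← pow_mul, mul_assoc]

end MvPowerSeries

/-- Springer's formula.  Taking the Sylvester–Cayley input as the definition, the
Poincaré series of invariants of the binary `d`-form is the series whose `n`-th
coefficient is the coefficient of `t^n z^{dn}` in
`f_d(t,z²) = (1-z²)/∏_{j=0}^d (1 - t z^{2j})`, and it equals
`Σ_{0 ≤ k < d/2} φ_{d-2k}((-1)^k z^{k(k+1)}(1-z²)/((z²;z²)_k (z²;z²)_{d-k}))`. -/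
theorem stmt8 (d : ℕ) (hd : 1 ≤ d) :
    (PowerSeries.mk fun n : ℕ =>
        MvPowerSeries.coeff (Finsupp.single 0 n + Finsupp.single 1 (d * n))
          ((1 - (MvPowerSeries.X 1 : MvPowerSeries (Fin 2) ℂ) ^ 2) *
            (∏ j ∈ range (d + 1),
              (1 - (MvPowerSeries.X 0 : MvPowerSeries (Fin 2) ℂ) *
                (MvPowerSeries.X 1) ^ (2 * j)))⁻¹)) =
      ∑ k ∈ (range (d + 1)).filter fun k => 2 * k < d,
        phiOp (d - 2 * k)
          (((-1 : PowerSeries ℂ) ^ k * (PowerSeries.X : PowerSeries ℂ) ^ (k * (k + 1)) *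
              (1 - PowerSeries.X ^ 2)) *
            ((∏ j ∈ range k, (1 - (PowerSeries.X : PowerSeries ℂ) ^ (2 * (j + 1)))) *
              ∏ j ∈ range (d - k),
                (1 - (PowerSeries.X : PowerSeries ℂ) ^ (2 * (j + 1))))⁻¹) := by
  ext n
  rw [PowerSeries.coeff_mk, MvPowerSeries.coeff_one_sub_X_one_sq_mul_inv_prod, map_sum, sum_filter]
  refine sum_congr rfl fun k _ => ?_
  have hsummand :
      ((-1 : ℂ⟦X⟧) ^ k * PowerSeries.X ^ (k * (k + 1)) * (1 - PowerSeries.X ^ 2)) *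
          ((∏ j ∈ range k, (1 - PowerSeries.X ^ (2 * (j + 1)))) *
            ∏ j ∈ range (d - k), (1 - PowerSeries.X ^ (2 * (j + 1))))⁻¹ =
        (1 - PowerSeries.X ^ 2) * PowerSeries.springerCoeff d k := by
    simp only [PowerSeries.springerCoeff, qPochhammer, ← pow_mul]
    ring
  rw [phiOp, PowerSeries.coeff_mk, hsummand, PowerSeries.coeff_mul_X_pow_mul_eq_ite]
  intro hdk
  rw [map_mul, PowerSeries.constantCoeff_springerCoeff (by omega), mul_zero]
end

section
/- Let d ≥ 1 and f_d(t,p,q) = b₃(p,q) / ∏_{k+l ≤ d, k,l ≥ 0} (1 - t p^k q^l) with b₃(p,q) = 1 + pq + q²/p − 2q − q². As a rational function of t over ℂ(p,q), the partial fraction decomposition is f_d(t,p,q) = Σ_{k+j ≤ d} R_{k,j}(p,q)/(1 - t p^k q^j), where R_{k,j}(p,q) = (-1)^k p^{k(k+1)/2} b₃(p,q) / ( [∏_{s=0, s≠j}^{d} (p^{-k} q^{s-j}; p)_{d+1-s}] · (p;p)_k · (p;p)_{d-k-j} ). -/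
open Finset

/-- Shortcut instance: `ℂ(p)(q)` is a field. -/
noncomputable instance : Field (RatFunc (RatFunc ℂ)) := inferInstance
/-- Shortcut instance: `ℂ(p)(q)(t)` is a field. -/
noncomputable instance : Field (RatFunc (RatFunc (RatFunc ℂ))) := inferInstance

/-- The variable `t` in the field `ℂ(p)(q)(t)`. -/
noncomputable def tv : RatFunc (RatFunc (RatFunc ℂ)) := RatFunc.X
/-- The variable `q` in the field `ℂ(p)(q)(t)`. -/
noncomputable def qv : RatFunc (RatFunc (RatFunc ℂ)) := RatFunc.C RatFunc.X
/-- The variable `p` in the field `ℂ(p)(q)(t)`. -/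
noncomputable def pv : RatFunc (RatFunc (RatFunc ℂ)) := RatFunc.C (RatFunc.C RatFunc.X)

/-- `b₃(p,q) = 1 + pq + q²/p − 2q − q²`. -/
noncomputable def b3 : RatFunc (RatFunc (RatFunc ℂ)) :=
  1 + pv * qv + qv ^ 2 / pv - 2 * qv - qv ^ 2

/-- The `q`-shifted factorial `(a;x)_n = ∏_{i=0}^{n-1} (1 - a x^i)`. -/
noncomputable def qp (a x : RatFunc (RatFunc (RatFunc ℂ))) (n : ℕ) :
    RatFunc (RatFunc (RatFunc ℂ)) := ∏ i ∈ range n, (1 - a * x ^ i)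

/-!
The nodes `p^k q^l` with `k + l ≤ d` are nonzero and pairwise distinct, so the partial fraction
expansion `1/∏ᵢ (1 - t aᵢ) = ∑ᵢ (∏_{j≠i} (1 - aⱼ/aᵢ))⁻¹ / (1 - t aᵢ)` applies; it is the
barycentric form of Lagrange interpolation of `1` at the nodes `aᵢ⁻¹`. For the node `(k, j)` the
coefficient is a product over the triangle minus `(k, j)`. Grouped by the exponent `s` of `q`,
each row `s ≠ j` is `(p^{-k} q^{s-j}; p)_{d+1-s}`, and the row `s = j` splits at `k` into
`∏_{i<k} (1 - p^{i-k}) = (-1)^k p^{-k(k+1)/2} (p;p)_k` and `(p;p)_{d-k-j}`.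
-/

section

open Polynomial

theorem Finset.inv_prod_one_sub_mul_eq_sum {K ι : Type*} [Field K] [DecidableEq ι]
    {s : Finset ι} (hs : s.Nonempty) {a : ι → K} (ha : ∀ i ∈ s, a i ≠ 0)
    (hinj : Set.InjOn a s) {u : K} (hu : ∀ i ∈ s, 1 - u * a i ≠ 0) :
    (∏ i ∈ s, (1 - u * a i))⁻¹ =
      ∑ i ∈ s, (∏ j ∈ s.erase i, (1 - a j / a i))⁻¹ * (1 - u * a i)⁻¹ := by
  set v : ι → K := fun i => (a i)⁻¹
  have hv : Set.InjOn v s := fun i hi j hj h => hinj hi hj (inv_injective h)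
  have hx : ∀ i ∈ s, u ≠ v i := fun i hi h => hu i hi (by simp [v, h, ha i hi])
  have hsplit : ∀ i ∈ s, 1 - u * a i = -a i * (u - v i) := fun i hi => by
    simp only [v]; field_simp [ha i hi]; ring
  have hnode : ∀ i ∈ s, ∀ j ∈ s, 1 - a j / a i = -a j * (v i - v j) := fun i hi j hj => by
    simp only [v]; field_simp [ha i hi, ha j hj]; ring
  have hbary := Lagrange.eval_interpolate_not_at_node 1 hx
  simp only [Lagrange.interpolate_one hv hs, eval_one, Lagrange.eval_nodal, Pi.one_apply,
    mul_one] at hbary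
  rw [prod_congr rfl hsplit, prod_mul_distrib, mul_inv, inv_eq_of_mul_eq_one_right hbary.symm,
    mul_sum]
  refine sum_congr rfl fun i hi => ?_
  rw [← mul_prod_erase s _ hi, prod_congr rfl fun j hj => hnode i hi j (mem_of_mem_erase hj),
    hsplit i hi, Lagrange.nodalWeight, prod_mul_distrib, prod_inv_distrib]
  simp only [mul_inv]
  ring

theorem RatFunc.C_mul_X_pow_injective {K : Type*} [Field K] {a b : K} {m n : ℕ} (ha : a ≠ 0)
    (h : RatFunc.C a * RatFunc.X ^ m = RatFunc.C b * RatFunc.X ^ n) : a = b ∧ m = n := by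
  have hmono : monomial m a = monomial n b := by
    apply IsFractionRing.injective K[X] (RatFunc K)
    simpa [← C_mul_X_pow_eq_monomial] using h
  rcases monomial_eq_monomial_iff.mp hmono with ⟨hmn, hab⟩ | ⟨ha0, -⟩
  · exact ⟨hab, hmn⟩
  · exact absurd ha0 ha

theorem RatFunc.one_sub_X_mul_C_ne_zero {K : Type*} [Field K] (c : K) :
    1 - RatFunc.X * RatFunc.C c ≠ 0 := by
  have : (1 - Polynomial.X * Polynomial.C c : K[X]) ≠ 0 := fun h => by
    simpa using congrArg (coeff · 0) h
  rw [mul_comm]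
  simpa using (map_ne_zero_iff _ (IsFractionRing.injective K[X] (RatFunc K))).mpr this

end

theorem pv_ne_zero : pv ≠ 0 :=
  (map_ne_zero _).2 ((map_ne_zero _).2 RatFunc.X_ne_zero)

theorem qv_ne_zero : qv ≠ 0 :=
  (map_ne_zero _).2 RatFunc.X_ne_zero

theorem pv_pow_mul_qv_pow_eq_C (k l : ℕ) :
    pv ^ k * qv ^ l = RatFunc.C (RatFunc.C ((RatFunc.X : RatFunc ℂ) ^ k) * RatFunc.X ^ l) := by
  simp only [pv, qv, map_mul, map_pow]

theorem pv_pow_mul_qv_pow_injective :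
    Function.Injective fun kl : ℕ × ℕ => pv ^ kl.1 * qv ^ kl.2 := by
  rintro ⟨k, l⟩ ⟨k', l'⟩ h
  simp only [pv_pow_mul_qv_pow_eq_C] at h
  obtain ⟨hk, hl⟩ :=
    RatFunc.C_mul_X_pow_injective (pow_ne_zero k RatFunc.X_ne_zero) (RatFunc.C_injective h)
  obtain ⟨-, hk⟩ := RatFunc.C_mul_X_pow_injective (b := (1 : ℂ)) (m := k) (n := k') one_ne_zero
    (by simpa using hk)
  rw [hk, hl]

theorem one_sub_tv_mul_pv_pow_mul_qv_pow_ne_zero (k l : ℕ) : 1 - tv * (pv ^ k * qv ^ l) ≠ 0 := by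
  rw [pv_pow_mul_qv_pow_eq_C]
  exact RatFunc.one_sub_X_mul_C_ne_zero _

theorem prod_range_one_sub_zpow_sub_mul {x : RatFunc (RatFunc (RatFunc ℂ))} (hx : x ≠ 0)
    (y : RatFunc (RatFunc (RatFunc ℂ))) (k n : ℕ) :
    ∏ i ∈ range n, (1 - x ^ ((i : ℤ) - k) * y) = qp (x ^ (-(k : ℤ)) * y) x n := by
  refine prod_congr rfl fun i _ => ?_
  rw [show (i : ℤ) - k = -k + i by ring, zpow_add₀ hx, zpow_natCast]
  ring

theorem prod_range_one_sub_zpow_sub {x : RatFunc (RatFunc (RatFunc ℂ))} (hx : x ≠ 0) (k : ℕ) :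
    ∏ i ∈ range k, (1 - x ^ ((i : ℤ) - k)) = (-1) ^ k * (x ^ (k * (k + 1) / 2))⁻¹ * qp x x k := by
  have hterm : ∀ i ∈ range k,
      1 - x ^ (((k - 1 - i : ℕ) : ℤ) - k) = -1 * (x ^ (i + 1))⁻¹ * (1 - x * x ^ i) := by
    intro i hi
    have hexp : ((k - 1 - i : ℕ) : ℤ) - k = -((i + 1 : ℕ) : ℤ) := by
      have := mem_range.1 hi; omega
    rw [hexp, zpow_neg, zpow_natCast]
    field_simp
    ring
  have hgauss : ∑ i ∈ range k, (i + 1) = k * (k + 1) / 2 := by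
    rw [← add_zero (∑ i ∈ range k, (i + 1)), ← sum_range_succ' (fun i => i), sum_range_id,
      Nat.add_sub_cancel, mul_comm]
  rw [← prod_range_reflect, prod_congr rfl hterm, prod_mul_distrib, prod_mul_distrib, prod_const,
    card_range, prod_inv_distrib, prod_pow_eq_pow_sum, hgauss, qp]

theorem prod_Ico_one_sub_zpow_sub (x : RatFunc (RatFunc (RatFunc ℂ))) (k n : ℕ) :
    ∏ i ∈ Ico (k + 1) n, (1 - x ^ ((i : ℤ) - k)) = qp x x (n - (k + 1)) := by
  rw [prod_Ico_eq_prod_range, qp]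
  refine prod_congr rfl fun i _ => ?_
  rw [show ((k + 1 + i : ℕ) : ℤ) - k = (i + 1 : ℕ) by push_cast; ring, zpow_natCast, pow_succ']

theorem prod_range_erase_one_sub_zpow_sub {x : RatFunc (RatFunc (RatFunc ℂ))} (hx : x ≠ 0)
    {k n : ℕ} (hk : k < n) :
    ∏ i ∈ (range n).erase k, (1 - x ^ ((i : ℤ) - k)) =
      (-1) ^ k * (x ^ (k * (k + 1) / 2))⁻¹ * (qp x x k * qp x x (n - (k + 1))) := by
  have hsplit : (range n).erase k = range k ∪ Ico (k + 1) n := by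
    ext i; simp only [mem_erase, mem_range, mem_union, mem_Ico]; omega
  have hdisj : Disjoint (range k) (Ico (k + 1) n) := by
    simp only [disjoint_left, mem_range, mem_Ico]; omega
  rw [hsplit, prod_union hdisj, prod_range_one_sub_zpow_sub hx, prod_Ico_one_sub_zpow_sub]
  ring

theorem prod_erase_triangle {M : Type*} [CommMonoid M] (f : ℕ × ℕ → M) {d k j : ℕ}
    (hkj : k + j ≤ d) :
    ∏ x ∈ ((range (d + 1) ×ˢ range (d + 1)).filter fun x => x.1 + x.2 ≤ d).erase (k, j), f x =
      (∏ i ∈ (range (d + 1 - j)).erase k, f (i, j)) *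
        ∏ s ∈ (range (d + 1)).erase j, ∏ i ∈ range (d + 1 - s), f (i, s) := by
  rw [← filter_ne', filter_filter, prod_filter, prod_product_right,
    ← mul_prod_erase _ _ (mem_range.2 (by omega : j < d + 1))]
  congr 1
  · rw [← prod_filter]
    congr 1
    ext i
    simp only [mem_filter, mem_erase, mem_range, ne_eq, Prod.mk.injEq, and_true]
    omega
  · refine prod_congr rfl fun s hs => ?_
    rw [← prod_filter]
    congr 1
    ext i
    simp only [mem_filter, mem_range, ne_eq, Prod.mk.injEq, ne_of_mem_erase hs, and_false,
      not_false_eq_true, and_true]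
    omega

theorem prod_erase_triangle_one_sub_div {d k j : ℕ} (hkj : k + j ≤ d) :
    ∏ x ∈ ((range (d + 1) ×ˢ range (d + 1)).filter fun x => x.1 + x.2 ≤ d).erase (k, j),
        (1 - pv ^ x.1 * qv ^ x.2 / (pv ^ k * qv ^ j)) =
      (-1) ^ k * (pv ^ (k * (k + 1) / 2))⁻¹ *
        ((∏ s ∈ (range (d + 1)).erase j,
            qp (pv ^ (-(k : ℤ)) * qv ^ ((s : ℤ) - (j : ℤ))) pv (d + 1 - s)) *
          qp pv pv k * qp pv pv (d - k - j)) := by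
  have hratio : ∀ x : ℕ × ℕ,
      pv ^ x.1 * qv ^ x.2 / (pv ^ k * qv ^ j) = pv ^ ((x.1 : ℤ) - k) * qv ^ ((x.2 : ℤ) - j) := by
    intro x
    rw [zpow_sub₀ pv_ne_zero, zpow_sub₀ qv_ne_zero]
    simp only [zpow_natCast]
    ring
  simp_rw [hratio]
  rw [prod_erase_triangle _ hkj]
  simp only [sub_self, zpow_zero, mul_one]
  rw [prod_range_erase_one_sub_zpow_sub pv_ne_zero (by omega : k < d + 1 - j),
    show d + 1 - j - (k + 1) = d - k - j by omega]
  simp_rw [prod_range_one_sub_zpow_sub_mul pv_ne_zero]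
  ring

theorem stmt11_general (d : ℕ) :
    b3 / ∏ kl ∈ ((range (d + 1)) ×ˢ range (d + 1)).filter (fun kl => kl.1 + kl.2 ≤ d),
          (1 - tv * pv ^ kl.1 * qv ^ kl.2) =
      ∑ kj ∈ ((range (d + 1)) ×ˢ range (d + 1)).filter (fun kj => kj.1 + kj.2 ≤ d),
        ((-1) ^ kj.1 * pv ^ (kj.1 * (kj.1 + 1) / 2) * b3 /
            ((∏ s ∈ (range (d + 1)).erase kj.2,
                qp (pv ^ (-(kj.1 : ℤ)) * qv ^ ((s : ℤ) - (kj.2 : ℤ))) pv (d + 1 - s)) *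
              qp pv pv kj.1 * qp pv pv (d - kj.1 - kj.2))) /
          (1 - tv * pv ^ kj.1 * qv ^ kj.2) := by
  simp_rw [mul_assoc tv]
  rw [div_eq_mul_inv, inv_prod_one_sub_mul_eq_sum ⟨(0, 0), by simp⟩
    (fun x _ => mul_ne_zero (pow_ne_zero _ pv_ne_zero) (pow_ne_zero _ qv_ne_zero))
    pv_pow_mul_qv_pow_injective.injOn
    (fun x _ => one_sub_tv_mul_pv_pow_mul_qv_pow_ne_zero x.1 x.2), mul_sum]
  refine sum_congr rfl fun ⟨k, j⟩ hkj => ?_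
  rw [prod_erase_triangle_one_sub_div (mem_filter.1 hkj).2, mul_inv, mul_inv, inv_inv,
    ← inv_pow, inv_neg_one]
  ring

/-- Partial fraction decomposition of
`f_d(t,p,q) = b₃(p,q)/∏_{k+l≤d} (1 - t p^k q^l)` as a rational function of `t`:
`f_d = Σ_{k+j≤d} R_{k,j}(p,q)/(1 - t p^k q^j)` with
`R_{k,j} = (-1)^k p^{k(k+1)/2} b₃ / ((∏_{s≠j} (p^{-k}q^{s-j};p)_{d+1-s}) (p;p)_k (p;p)_{d-k-j})`. -/
theorem stmt11 (d : ℕ) (hd : 1 ≤ d) :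
    b3 / ∏ kl ∈ ((range (d + 1)) ×ˢ range (d + 1)).filter (fun kl => kl.1 + kl.2 ≤ d),
          (1 - tv * pv ^ kl.1 * qv ^ kl.2) =
      ∑ kj ∈ ((range (d + 1)) ×ˢ range (d + 1)).filter (fun kj => kj.1 + kj.2 ≤ d),
        ((-1) ^ kj.1 * pv ^ (kj.1 * (kj.1 + 1) / 2) * b3 /
            ((∏ s ∈ (range (d + 1)).erase kj.2,
                qp (pv ^ (-(kj.1 : ℤ)) * qv ^ ((s : ℤ) - (kj.2 : ℤ))) pv (d + 1 - s)) *
              qp pv pv kj.1 * qp pv pv (d - kj.1 - kj.2))) /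
          (1 - tv * pv ^ kj.1 * qv ^ kj.2) :=
  stmt11_general d
end
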